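/- Let S_Z be an orbital fuzzy iterated function system with contraction constant C ∈ [0,1). Then for every u ∈ F*_S and every n ∈ ℕ, d_∞(Z^[n](u), u_u) ≤ (C^n/(1−C))·diam(F_S(supp u) ∪ supp u), where u_u = lim_m Z^[m](u). -/

import Mathlib

open Metric Filter Topology Set

/-- The orbit of a point `x` under the family of maps `f i`:
`x` together with all images of `x` under finite compositions of the `f i`. -/
def orbitIFS {X I : Type*} (f : I → X → X) (x : X) : Set X :=
  ⋃ l : List I, {l.foldr (fun i y => f i y) x}

/-- The fractal (Hutchinson–Barnsley) operator `K ↦ ⋃ i, f i '' K`. -/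
def fractalOp {X I : Type*} (f : I → X → X) (K : Set X) : Set X :=
  ⋃ i, f i '' K

/-- Image of a fuzzy set under a map: `f(u)(y) = sup_{x ∈ f⁻¹ y} u x` (0 if empty). -/
noncomputable def fuzzyImage {X : Type*} (g : X → X) (u : X → ℝ) : X → ℝ :=
  fun y => sSup (u '' (g ⁻¹' {y}))

/-- The fuzzy Hutchinson–Barnsley operator `Z(u) = ∨ i, ρ i (f i (u))`. -/
noncomputable def Zop {X I : Type*} (f : I → X → X) (ρ : I → ℝ → ℝ) (u : X → ℝ) : X → ℝ :=
  fun y => ⨆ i, ρ i (fuzzyImage (f i) u y)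

/-- The metric `d_∞(u,v) = sup_{α ∈ (0,1]} h([u]^α, [v]^α)`. -/
noncomputable def dInfty {X : Type*} [MetricSpace X] (u v : X → ℝ) : ℝ :=
  ⨆ α : Ioc (0:ℝ) 1, hausdorffDist {x | (α:ℝ) ≤ u x} {x | (α:ℝ) ≤ v x}

/-- The support of a fuzzy set: the closure of `{x | 0 < u x}`. -/
def fsupp {X : Type*} [MetricSpace X] (u : X → ℝ) : Set X := closure {x | 0 < u x}

/-- The crisp fuzzy point `δ_s`. -/
def fdelta {X : Type*} [DecidableEq X] (s : X) : X → ℝ := fun t => if t = s then 1 else 0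

/-- `u^x` : the restriction of `u` to the closure of the orbit of `w` (zero outside). -/
noncomputable def restrictO {X I : Type*} [MetricSpace X] (f : I → X → X) (u : X → ℝ)
    (w : X) : X → ℝ :=
  (closure (orbitIFS f w)).indicator u

/-- A normal compactly supported fuzzy set (with values in `[0,1]`). -/
def IsFuzzyN {X : Type*} [MetricSpace X] (u : X → ℝ) : Prop :=
  (∀ x, u x ∈ Icc (0:ℝ) 1) ∧ (∃ x, u x = 1) ∧ IsCompact (fsupp u)

/-- An upper semicontinuous normal compactly supported fuzzy set: membership in `F*_X`. -/
def IsFuzzyStar {X : Type*} [MetricSpace X] (u : X → ℝ) : Prop :=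
  IsFuzzyN u ∧ UpperSemicontinuous u

/-- Membership in `F*_S`: for each point of positive membership there is an orbit
containing it together with a point of membership one. -/
def InFS {X I : Type*} [MetricSpace X] (f : I → X → X) (u : X → ℝ) : Prop :=
  IsFuzzyStar u ∧ ∀ x, 0 < u x → ∃ w y, x ∈ orbitIFS f w ∧ y ∈ orbitIFS f w ∧ u y = 1

/-- The orbital contraction condition. -/
def OrbitalContr {X I : Type*} [MetricSpace X] (f : I → X → X) (C : ℝ) : Prop :=
  ∀ i x, ∀ y ∈ orbitIFS f x, ∀ z ∈ orbitIFS f x, dist (f i y) (f i z) ≤ C * dist y z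

/-- An admissible system of grey level maps. -/
def Admissible {I : Type*} (ρ : I → ℝ → ℝ) : Prop :=
  (∀ i, ρ i 0 = 0) ∧ (∀ i, MonotoneOn (ρ i) (Icc (0:ℝ) 1)) ∧
  (∀ i, ∀ t ∈ Icc (0:ℝ) 1, ContinuousWithinAt (ρ i) (Ici t) t) ∧
  (∀ i, ∀ t ∈ Icc (0:ℝ) 1, ρ i t ∈ Icc (0:ℝ) 1) ∧ (∃ j, ρ j 1 = 1)


/-! The `α`-cuts of consecutive iterates `Zᵏu` and `Zᵏ⁺¹u` are at Hausdorff distance at most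
`Cᵏ D`, where `D = diam (F_S(supp u) ∪ supp u)`: each point of positive membership in one iterate
lies within `Cᵏ D` of a point of the same orbit at which the other iterate is at least as large.
For `k = 0` this is the orbit condition defining `F*_S` (a point of full membership in the same
orbit, and its image under a map with `ρ j 1 = 1`). The maps `f i` preserve orbits and contract
along them, so `Z` propagates the property with an extra factor `C`; this needs the suprema
defining `Z` to be attained, which holds because `Z` preserves compactness of the cuts.
Then `d_∞(Zᵏu, u_u) ≤ Cᵏ D + d_∞(Zᵏ⁺¹u, u_u)`, and summing the geometric series while
`d_∞(Zᵐu, u_u) → 0` gives the bound. -/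

lemma le_geom_div_mul_of_le_add_of_tendsto {a : ℕ → ℝ} {C D : ℝ} (hC0 : 0 ≤ C) (hC1 : C < 1)
    (hD : 0 ≤ D) (ha : ∀ k, a k ≤ C ^ k * D + a (k + 1)) (hlim : Tendsto a atTop (𝓝 0))
    (n : ℕ) : a n ≤ C ^ n / (1 - C) * D := by
  have hsum : ∀ m, n ≤ m → a n ≤ (∑ k ∈ Finset.Ico n m, C ^ k) * D + a m := by
    intro m hm
    induction m, hm using Nat.le_induction with
    | base => simp
    | succ m hm ih =>
      rw [Finset.sum_Ico_succ_top hm, add_mul, add_assoc]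
      exact ih.trans (add_le_add le_rfl (ha m))
  have hbound : ∀ m, n ≤ m → a n ≤ C ^ n / (1 - C) * D + a m := fun m hm =>
    (hsum m hm).trans <| add_le_add
      (mul_le_mul_of_nonneg_right (geom_sum_Ico_le_of_lt_one hC0 hC1) hD) le_rfl
  simpa using ge_of_tendsto (tendsto_const_nhds.add hlim) (eventually_atTop.2 ⟨n, hbound⟩)

lemma dInfty_le_add {X : Type*} [MetricSpace X] {u v w : X → ℝ} {ε : ℝ} (hε : 0 ≤ ε)
    (huv : ∀ α ∈ Ioc (0:ℝ) 1,
      hausdorffEDist {x | α ≤ u x} {x | α ≤ v x} ≤ ENNReal.ofReal ε) :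
    dInfty u w ≤ ε + dInfty v w := by
  have hdist (α : Ioc (0:ℝ) 1) :
      hausdorffDist {x | (α:ℝ) ≤ u x} {x | (α:ℝ) ≤ v x} ≤ ε :=
    ENNReal.toReal_le_of_le_ofReal hε (huv α α.2)
  have hfin (α : Ioc (0:ℝ) 1) : hausdorffEDist {x | (α:ℝ) ≤ u x} {x | (α:ℝ) ≤ v x} ≠ ⊤ :=
    ne_top_of_le_ne_top ENNReal.ofReal_ne_top (huv α α.2)
  have hnonneg : 0 ≤ ε + dInfty v w :=
    add_nonneg hε (Real.iSup_nonneg fun _ => hausdorffDist_nonneg)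
  by_cases hbdd : BddAbove (range fun α : Ioc (0:ℝ) 1 =>
      hausdorffDist {x | (α:ℝ) ≤ u x} {x | (α:ℝ) ≤ w x})
  · obtain ⟨M, hM⟩ := hbdd
    have hbdd' : BddAbove (range fun α : Ioc (0:ℝ) 1 =>
        hausdorffDist {x | (α:ℝ) ≤ v x} {x | (α:ℝ) ≤ w x}) := by
      refine ⟨ε + M, forall_mem_range.2 fun α => ?_⟩
      refine (hausdorffDist_triangle (by rw [hausdorffEDist_comm]; exact hfin α)).trans ?_
      rw [hausdorffDist_comm]
      exact add_le_add (hdist α) (hM (mem_range_self α))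
    refine Real.iSup_le (fun α => ?_) hnonneg
    exact (hausdorffDist_triangle (hfin α)).trans (add_le_add (hdist α) (le_ciSup hbdd' α))
  · rw [dInfty, Real.iSup_of_not_bddAbove hbdd]
    exact hnonneg

lemma exists_pos_forall_le_iff_of_monotoneOn {φ : ℝ → ℝ} (h0 : φ 0 = 0)
    (hmono : MonotoneOn φ (Icc 0 1))
    (hcont : ∀ t ∈ Icc (0:ℝ) 1, ContinuousWithinAt φ (Ici t) t) {β : ℝ} (hβ : 0 < β) :
    ∃ r > 0, ∀ t ∈ Icc (0:ℝ) 1, β ≤ φ t ↔ r ≤ t := by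
  set T := {t ∈ Icc (0:ℝ) 1 | β ≤ φ t}
  rcases T.eq_empty_or_nonempty with hT | hT
  · refine ⟨2, two_pos, fun t ht => ⟨fun h => ?_, fun h => ?_⟩⟩
    · exact absurd (show t ∈ T from ⟨ht, h⟩) (hT ▸ notMem_empty t)
    · linarith [ht.2]
  have hbdd : BddBelow T := ⟨0, fun t ht => ht.1.1⟩
  have hle : ∀ t ∈ T, sInf T ≤ t := fun t ht => csInf_le hbdd ht
  obtain ⟨t₀, ht₀⟩ := hT
  have hr : sInf T ∈ Icc (0:ℝ) 1 :=
    ⟨le_csInf ⟨t₀, ht₀⟩ fun t ht => ht.1.1, (hle t₀ ht₀).trans ht₀.1.2⟩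
  have hφr : β ≤ φ (sInf T) := by
    have : (𝓝[T] sInf T).NeBot :=
      mem_closure_iff_nhdsWithin_neBot.1 (csInf_mem_closure ⟨t₀, ht₀⟩ hbdd)
    exact ge_of_tendsto ((hcont _ hr).mono_left (nhdsWithin_mono _ fun t ht => hle t ht))
      (eventually_mem_nhdsWithin.mono fun t ht => ht.2)
  refine ⟨sInf T, hr.1.lt_of_ne fun h => ?_,
    fun t ht => ⟨fun h => hle t ⟨ht, h⟩, fun h => hφr.trans (hmono hr ht h)⟩⟩
  rw [← h, h0] at hφr
  linarith

lemma Admissible.pos_of_apply_pos {I : Type*} {ρ : I → ℝ → ℝ} (hρ : Admissible ρ) {i : I}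
    {t : ℝ} (ht : 0 ≤ t) (h : 0 < ρ i t) : 0 < t :=
  ht.lt_of_ne fun h' => by rw [← h', hρ.1 i] at h; exact lt_irrefl 0 h

section FuzzyImage

variable {X : Type*} {v : X → ℝ} {g : X → X}

lemma bddAbove_image_of_le_one (hv : ∀ x, v x ≤ 1) (s : Set X) : BddAbove (v '' s) :=
  ⟨1, forall_mem_image.2 fun x _ => hv x⟩

lemma le_fuzzyImage (hv : ∀ x, v x ≤ 1) {x y : X} (hxy : g x = y) :
    v x ≤ fuzzyImage g v y :=
  le_csSup (bddAbove_image_of_le_one hv _) ⟨x, hxy, rfl⟩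

lemma fuzzyImage_mem_Icc (hv : ∀ x, v x ∈ Icc (0:ℝ) 1) (g : X → X) (y : X) :
    fuzzyImage g v y ∈ Icc (0:ℝ) 1 := by
  rcases (v '' (g ⁻¹' {y})).eq_empty_or_nonempty with h | h
  · simp [fuzzyImage, h]
  · obtain ⟨_, x, hx, rfl⟩ := h
    exact ⟨(hv x).1.trans (le_fuzzyImage (fun x => (hv x).2) hx),
      csSup_le ⟨_, x, hx, rfl⟩ (forall_mem_image.2 fun x _ => (hv x).2)⟩

lemma nonempty_of_fuzzyImage_pos {y : X} (h : 0 < fuzzyImage g v y) :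
    (v '' (g ⁻¹' {y})).Nonempty := by
  rw [nonempty_iff_ne_empty]
  intro he
  simp [fuzzyImage, he] at h

end FuzzyImage

structure HasCompactCuts {X : Type*} [TopologicalSpace X] (v : X → ℝ) : Prop where
  mem_Icc : ∀ x, v x ∈ Icc (0:ℝ) 1
  isCompact_cut : ∀ r : ℝ, 0 < r → IsCompact {x | r ≤ v x}

namespace HasCompactCuts

variable {X : Type*} [TopologicalSpace X] [T2Space X] {v : X → ℝ} {g : X → X}

lemma exists_eq_fuzzyImage (hv : HasCompactCuts v) (hg : Continuous g) {y : X}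
    (h : 0 < fuzzyImage g v y) : ∃ x, g x = y ∧ v x = fuzzyImage g v y := by
  set s := fuzzyImage g v y
  let K : Ioo 0 s → Set X := fun r => g ⁻¹' {y} ∩ {x | (r:ℝ) ≤ v x}
  have hK : ∀ r, IsCompact (K r) := fun r =>
    (hv.isCompact_cut r r.2.1).inter_left (isClosed_singleton.preimage hg)
  have hKanti : Antitone K := fun r r' hrr' x hx => ⟨hx.1, (show (r:ℝ) ≤ r' from hrr').trans hx.2⟩
  have hKne : ∀ r, (K r).Nonempty := fun r => by
    obtain ⟨_, ⟨x, hx, rfl⟩, hlt⟩ := exists_lt_of_lt_csSup (nonempty_of_fuzzyImage_pos h) r.2.2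
    exact ⟨x, hx, hlt.le⟩
  have : Nonempty (Ioo 0 s) := (nonempty_Ioo.2 h).to_subtype
  obtain ⟨x, hx⟩ := IsCompact.nonempty_iInter_of_directed_nonempty_isCompact_isClosed K
    hKanti.directed_ge hKne hK fun r => (hK r).isClosed
  rw [mem_iInter] at hx
  refine ⟨x, (hx (Classical.arbitrary _)).1, le_antisymm
    (le_fuzzyImage (fun x => (hv.mem_Icc x).2) (hx (Classical.arbitrary _)).1) ?_⟩
  refine le_of_forall_lt_imp_le_of_dense fun r hr => ?_
  rcases le_or_gt r 0 with hr0 | hr0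
  · exact hr0.trans (hv.mem_Icc x).1
  · exact (hx ⟨r, hr0, hr⟩).2

lemma setOf_le_fuzzyImage (hv : HasCompactCuts v) (hg : Continuous g) {r : ℝ} (hr : 0 < r) :
    {y | r ≤ fuzzyImage g v y} = g '' {x | r ≤ v x} := by
  ext y
  refine ⟨fun hy => ?_, ?_⟩
  · obtain ⟨x, rfl, hx⟩ := hv.exists_eq_fuzzyImage hg (hr.trans_le hy)
    exact ⟨x, show r ≤ v x by rwa [hx], rfl⟩
  · rintro ⟨x, hx, rfl⟩
    exact le_trans hx (le_fuzzyImage (fun x => (hv.mem_Icc x).2) rfl)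

end HasCompactCuts

lemma IsFuzzyStar.hasCompactCuts {X : Type*} [MetricSpace X] {u : X → ℝ}
    (hu : IsFuzzyStar u) : HasCompactCuts u :=
  ⟨hu.1.1, fun r hr => hu.1.2.2.of_isClosed_subset (hu.2.isClosed_preimage r)
    fun _ hx => subset_closure (hr.trans_le hx)⟩

section Zop

variable {X I : Type*} [Finite I] {f : I → X → X} {ρ : I → ℝ → ℝ} {v : X → ℝ}

lemma le_Zop (i : I) (y : X) : ρ i (fuzzyImage (f i) v y) ≤ Zop f ρ v y :=
  le_ciSup (f := fun j => ρ j (fuzzyImage (f j) v y)) (finite_range _).bddAbove i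

variable [Nonempty I]

lemma exists_Zop_eq (y : X) : ∃ i, Zop f ρ v y = ρ i (fuzzyImage (f i) v y) := by
  obtain ⟨i, hi⟩ := Finite.exists_max fun i => ρ i (fuzzyImage (f i) v y)
  exact ⟨i, le_antisymm (ciSup_le hi) (le_Zop i y)⟩

lemma Zop_mem_Icc (hρ : Admissible ρ) (hv : ∀ x, v x ∈ Icc (0:ℝ) 1) (y : X) :
    Zop f ρ v y ∈ Icc (0:ℝ) 1 := by
  obtain ⟨i, hi⟩ := exists_Zop_eq (f := f) (ρ := ρ) (v := v) y
  rw [hi]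
  exact hρ.2.2.2.1 i _ (fuzzyImage_mem_Icc hv _ y)

lemma setOf_le_Zop (β : ℝ) :
    {y | β ≤ Zop f ρ v y} = ⋃ i, {y | β ≤ ρ i (fuzzyImage (f i) v y)} := by
  ext y
  simp only [mem_iUnion, mem_ofPred_eq]
  refine ⟨fun hy => ?_, fun ⟨i, hi⟩ => hi.trans (le_Zop i y)⟩
  obtain ⟨i, hi⟩ := exists_Zop_eq (f := f) (ρ := ρ) (v := v) y
  exact ⟨i, hi ▸ hy⟩

lemma hasCompactCuts_Zop [TopologicalSpace X] [T2Space X] (hρ : Admissible ρ)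
    (hf : ∀ i, Continuous (f i)) (hv : HasCompactCuts v) : HasCompactCuts (Zop f ρ v) := by
  refine ⟨Zop_mem_Icc hρ hv.mem_Icc, fun β hβ => ?_⟩
  rw [setOf_le_Zop]
  refine isCompact_iUnion fun i => ?_
  obtain ⟨r, hr, hiff⟩ :=
    exists_pos_forall_le_iff_of_monotoneOn (hρ.1 i) (hρ.2.1 i) (hρ.2.2.1 i) hβ
  have hcut : {y | β ≤ ρ i (fuzzyImage (f i) v y)} = {y | r ≤ fuzzyImage (f i) v y} :=
    Set.ext fun y => hiff _ (fuzzyImage_mem_Icc hv.mem_Icc _ _)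
  rw [hcut, hv.setOf_le_fuzzyImage (hf i) hr]
  exact (hv.isCompact_cut r hr).image (hf i)

lemma hasCompactCuts_iterate_Zop [TopologicalSpace X] [T2Space X] (hρ : Admissible ρ)
    (hf : ∀ i, Continuous (f i)) (hv : HasCompactCuts v) (k : ℕ) :
    HasCompactCuts ((Zop f ρ)^[k] v) := by
  induction k with
  | zero => exact hv
  | succ k ih => rw [Function.iterate_succ_apply']; exact hasCompactCuts_Zop hρ hf ih

end Zop

lemma isBounded_fractalOp_union {X I : Type*} [MetricSpace X] [Finite I] {f : I → X → X}
    (hf : ∀ i, Continuous (f i)) {K : Set X} (hK : IsCompact K) :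
    Bornology.IsBounded (fractalOp f K ∪ K) :=
  ((isCompact_iUnion fun i => hK.image (hf i)).union hK).isBounded

lemma map_mem_orbitIFS {X I : Type*} {f : I → X → X} (i : I) {w x : X}
    (hx : x ∈ orbitIFS f w) : f i x ∈ orbitIFS f w := by
  simp only [orbitIFS, mem_iUnion, mem_singleton_iff] at hx ⊢
  obtain ⟨l, rfl⟩ := hx
  exact ⟨i :: l, rfl⟩

section OrbitDominated

variable {X I : Type*} [MetricSpace X] {f : I → X → X}

def OrbitDominated (f : I → X → X) (ε : ℝ) (v w : X → ℝ) : Prop :=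
  ∀ x, 0 < v x → ∃ z y, x ∈ orbitIFS f z ∧ y ∈ orbitIFS f z ∧ dist x y ≤ ε ∧ v x ≤ w y

variable {ε : ℝ} {v w : X → ℝ}

lemma OrbitDominated.hausdorffEDist_le (h₁ : OrbitDominated f ε v w)
    (h₂ : OrbitDominated f ε w v) {α : ℝ} (hα : 0 < α) :
    hausdorffEDist {x | α ≤ v x} {x | α ≤ w x} ≤ ENNReal.ofReal ε := by
  refine hausdorffEDist_le_of_mem_edist (fun x hx => ?_) (fun x hx => ?_)
  · obtain ⟨-, y, -, -, hxy, hle⟩ := h₁ x (hα.trans_le hx)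
    exact ⟨y, hx.trans hle, by rw [edist_dist]; exact ENNReal.ofReal_le_ofReal hxy⟩
  · obtain ⟨-, y, -, -, hxy, hle⟩ := h₂ x (hα.trans_le hx)
    exact ⟨y, hx.trans hle, by rw [edist_dist]; exact ENNReal.ofReal_le_ofReal hxy⟩

variable [Finite I] {ρ : I → ℝ → ℝ} {C : ℝ} {u : X → ℝ}

lemma InFS.orbitDominated_self_Zop (hρ : Admissible ρ) (hf : ∀ i, Continuous (f i))
    (hu : InFS f u) :
    OrbitDominated f (diam (fractalOp f (fsupp u) ∪ fsupp u)) u (Zop f ρ u) := by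
  intro x hx
  obtain ⟨z, y₁, hxz, hy₁z, hy₁⟩ := hu.2 x hx
  obtain ⟨j, hj⟩ := hρ.2.2.2.2
  have hu1 : ∀ x, u x ≤ 1 := fun x => (hu.1.1.1 x).2
  have himage : fuzzyImage (f j) u (f j y₁) = 1 :=
    le_antisymm (fuzzyImage_mem_Icc hu.1.1.1 _ _).2 (hy₁ ▸ le_fuzzyImage hu1 rfl)
  refine ⟨z, f j y₁, hxz, map_mem_orbitIFS j hy₁z, dist_le_diam_of_mem
    (isBounded_fractalOp_union hf hu.1.1.2.2)
    (mem_union_right _ (subset_closure hx))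
    (mem_union_left _ (mem_iUnion.2
      ⟨j, y₁, subset_closure (show 0 < u y₁ by rw [hy₁]; exact one_pos), rfl⟩)), ?_⟩
  calc u x ≤ ρ j (fuzzyImage (f j) u (f j y₁)) := by rw [himage, hj]; exact hu1 x
    _ ≤ Zop f ρ u (f j y₁) := le_Zop j _

variable [Nonempty I]

lemma OrbitDominated.map_Zop (hρ : Admissible ρ) (hf : ∀ i, Continuous (f i)) (hC0 : 0 ≤ C)
    (horb : OrbitalContr f C) (hv : HasCompactCuts v) (hw : ∀ x, w x ∈ Icc (0:ℝ) 1)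
    (h : OrbitDominated f ε v w) : OrbitDominated f (C * ε) (Zop f ρ v) (Zop f ρ w) := by
  intro y hy
  obtain ⟨i, hi⟩ := exists_Zop_eq (f := f) (ρ := ρ) (v := v) y
  have hpos : 0 < fuzzyImage (f i) v y :=
    hρ.pos_of_apply_pos (fuzzyImage_mem_Icc hv.mem_Icc _ y).1 (hi ▸ hy)
  obtain ⟨x, rfl, hx⟩ := hv.exists_eq_fuzzyImage (hf i) hpos
  obtain ⟨z, x', hxz, hx'z, hdist, hle⟩ := h x (hx ▸ hpos)
  refine ⟨z, f i x', map_mem_orbitIFS i hxz, map_mem_orbitIFS i hx'z, ?_, ?_⟩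
  · calc dist (f i x) (f i x') ≤ C * dist x x' := horb i z x hxz x' hx'z
      _ ≤ C * ε := mul_le_mul_of_nonneg_left hdist hC0
  · calc Zop f ρ v (f i x) = ρ i (v x) := by rw [hi, hx]
      _ ≤ ρ i (w x') := hρ.2.1 i (hv.mem_Icc x) (hw x') hle
      _ ≤ ρ i (fuzzyImage (f i) w (f i x')) :=
          hρ.2.1 i (hw x') (fuzzyImage_mem_Icc hw _ _) (le_fuzzyImage (fun x => (hw x).2) rfl)
      _ ≤ Zop f ρ w (f i x') := le_Zop i _

lemma InFS.orbitDominated_Zop_self (hρ : Admissible ρ) (hf : ∀ i, Continuous (f i))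
    (hu : InFS f u) :
    OrbitDominated f (diam (fractalOp f (fsupp u) ∪ fsupp u)) (Zop f ρ u) u := by
  intro y hy
  obtain ⟨i, hi⟩ := exists_Zop_eq (f := f) (ρ := ρ) (v := u) y
  have hpos : 0 < fuzzyImage (f i) u y :=
    hρ.pos_of_apply_pos (fuzzyImage_mem_Icc hu.1.1.1 _ y).1 (hi ▸ hy)
  obtain ⟨x, rfl, hx⟩ := hu.1.hasCompactCuts.exists_eq_fuzzyImage (hf i) hpos
  have hxpos : 0 < u x := hx ▸ hpos
  obtain ⟨z, y₁, hxz, hy₁z, hy₁⟩ := hu.2 x hxpos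
  refine ⟨z, y₁, map_mem_orbitIFS i hxz, hy₁z, dist_le_diam_of_mem
    (isBounded_fractalOp_union hf hu.1.1.2.2)
    (mem_union_left _ (mem_iUnion.2 ⟨i, x, subset_closure hxpos, rfl⟩))
    (mem_union_right _ (subset_closure (show 0 < u y₁ by rw [hy₁]; exact one_pos))), ?_⟩
  rw [hy₁]
  exact (Zop_mem_Icc hρ hu.1.1.1 _).2

lemma InFS.orbitDominated_iterate_Zop (hρ : Admissible ρ) (hf : ∀ i, Continuous (f i))
    (hC0 : 0 ≤ C) (horb : OrbitalContr f C) (hu : InFS f u) (k : ℕ) :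
    OrbitDominated f (C ^ k * diam (fractalOp f (fsupp u) ∪ fsupp u))
        ((Zop f ρ)^[k] u) ((Zop f ρ)^[k + 1] u) ∧
      OrbitDominated f (C ^ k * diam (fractalOp f (fsupp u) ∪ fsupp u))
        ((Zop f ρ)^[k + 1] u) ((Zop f ρ)^[k] u) := by
  induction k with
  | zero =>
    simpa using ⟨hu.orbitDominated_self_Zop hρ hf, hu.orbitDominated_Zop_self hρ hf⟩
  | succ k ih =>
    have hcuts := hasCompactCuts_iterate_Zop hρ hf hu.1.hasCompactCuts
    have h₁ := ih.1.map_Zop hρ hf hC0 horb (hcuts k) (hcuts (k + 1)).mem_Icc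
    have h₂ := ih.2.map_Zop hρ hf hC0 horb (hcuts (k + 1)) (hcuts k).mem_Icc
    rw [← mul_assoc, ← pow_succ', ← Function.iterate_succ_apply' (Zop f ρ),
      ← Function.iterate_succ_apply' (Zop f ρ)] at h₁ h₂
    exact ⟨h₁, h₂⟩

end OrbitDominated

theorem stmt16_general {X I : Type*} [MetricSpace X]
    [Finite I] [Nonempty I]
    (f : I → X → X) (hcont : ∀ i, Continuous (f i))
    (C : ℝ) (hC0 : 0 ≤ C) (hC1 : C < 1) (horb : OrbitalContr f C)
    (ρ : I → ℝ → ℝ) (hρ : Admissible ρ)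
    (u : X → ℝ) (hu : InFS f u)
    (uu : X → ℝ)
    (huu : Tendsto (fun n => dInfty ((Zop f ρ)^[n] u) uu) atTop (nhds 0)) :
    ∀ n : ℕ, dInfty ((Zop f ρ)^[n] u) uu ≤
      (C ^ n / (1 - C)) * Metric.diam (fractalOp f (fsupp u) ∪ fsupp u) := by
  refine le_geom_div_mul_of_le_add_of_tendsto hC0 hC1 diam_nonneg (fun k => ?_) huu
  obtain ⟨h₁, h₂⟩ := hu.orbitDominated_iterate_Zop hρ hcont hC0 horb k
  exact dInfty_le_add (mul_nonneg (pow_nonneg hC0 k) diam_nonneg)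
    fun α hα => h₁.hausdorffEDist_le h₂ hα.1

/-- Remark 2.13 b): the a priori rate of convergence of the Picard
iterates of `Z`. -/
theorem stmt16 {X I : Type*} [MetricSpace X] [CompleteSpace X] [DecidableEq X]
    [Finite I] [Nonempty I]
    (f : I → X → X) (hcont : ∀ i, Continuous (f i))
    (C : ℝ) (hC0 : 0 ≤ C) (hC1 : C < 1) (horb : OrbitalContr f C)
    (ρ : I → ℝ → ℝ) (hρ : Admissible ρ)
    (u : X → ℝ) (hu : InFS f u)
    (uu : X → ℝ)
    (huu : Tendsto (fun n => dInfty ((Zop f ρ)^[n] u) uu) atTop (nhds 0)) :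
    ∀ n : ℕ, dInfty ((Zop f ρ)^[n] u) uu ≤
      (C ^ n / (1 - C)) * Metric.diam (fractalOp f (fsupp u) ∪ fsupp u) :=
  stmt16_general f hcont C hC0 hC1 horb ρ hρ u hu uu huu
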